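/- arXiv:2007.07293 — 2 statements merged into one kernel-verified Lean document; each statement's English description precedes it below -/
import Mathlib

section
/- Let D ≥ 1 and C ≥ 1 be real numbers, and let m be a positive integer satisfying m + 1 < 2D·log(m+1) + D·log C + 1. Then m < 4D·log(2D√C) + 1. -/
theorem implicit_to_explicit (D C : ℝ) (m : ℕ)
    (hD : 1 ≤ D) (hC : 1 ≤ C) (hm : 0 < m)
    (h : (m : ℝ) + 1 < 2 * D * Real.log (m + 1) + D * Real.log C + 1) :
    (m : ℝ) < 4 * D * Real.log (2 * D * Real.sqrt C) + 1 := by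
  have hD0 : (0:ℝ) < D := by linarith
  have hC0 : (0:ℝ) < C := by linarith
  have hx : (0:ℝ) < (m:ℝ) + 1 := by positivity
  have h4D : (0:ℝ) < 4 * D := by linarith
  -- log x ≤ x/(4D) + log(4D) - 1
  have key : Real.log ((m:ℝ) + 1) ≤ ((m:ℝ) + 1) / (4 * D) + Real.log (4 * D) - 1 := by
    have h1 := Real.log_le_sub_one_of_pos (show (0:ℝ) < ((m:ℝ)+1)/(4*D) by positivity)
    rw [Real.log_div (by positivity) (by positivity)] at h1
    linarith
  have h2D : (0:ℝ) < 2 * D := by linarith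
  have step1 : (m:ℝ) < 4 * D * Real.log (4 * D) - 4 * D + 2 * D * Real.log C + 1 := by
    have hmul := mul_le_mul_of_nonneg_left key (le_of_lt h2D)
    have hdiv : 2 * D * (((m:ℝ) + 1) / (4 * D)) = ((m:ℝ) + 1) / 2 := by
      field_simp; ring
    nlinarith [hmul, h]
  have hs : (1:ℝ) ≤ Real.sqrt C := by
    rw [show (1:ℝ) = Real.sqrt 1 by simp]
    exact Real.sqrt_le_sqrt hC
  have hs0 : (0:ℝ) < Real.sqrt C := by linarith
  have hlog2 : Real.log 2 < 1 := by
    have := Real.log_two_lt_d9; linarith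
  have e1 : Real.log (4 * D) = Real.log 4 + Real.log D :=
    Real.log_mul (by norm_num) (ne_of_gt hD0)
  have e2 : Real.log (2 * D * Real.sqrt C)
      = Real.log 2 + Real.log D + Real.log (Real.sqrt C) := by
    rw [Real.log_mul (by positivity) (ne_of_gt hs0),
        Real.log_mul (by norm_num) (ne_of_gt hD0)]
  have e3 : Real.log (Real.sqrt C) = Real.log C / 2 := Real.log_sqrt (le_of_lt hC0)
  have e4 : Real.log 4 = 2 * Real.log 2 := by
    rw [show (4:ℝ) = 2 ^ 2 by norm_num, Real.log_pow]; push_cast; ring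
  have final : 4 * D * Real.log (4 * D) - 4 * D + 2 * D * Real.log C
      ≤ 4 * D * Real.log (2 * D * Real.sqrt C) := by
    rw [e1, e2, e3, e4]
    nlinarith [hlog2, h4D]
  linarith
end

section
/- Suppose 0 < Δ_kl and Δ_ij > (1+ε)·Δ_kl with ε > e^{1/16} − 1, let b = (1 + e^{1/16} + ε)/(1 − e^{1/16} + ε), R ≥ Δ_ij, C ≥ 1, and set D₁ = 2(b+1)²R²/Δ_ij², D₂' = 2(b−1)²R²/Δ_kl². Then 4D₂'·log(2D₂'√C) − 3 > 4D₁·log(2D₁√C) + 1. -/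
/-!
The choice of `b` makes `(b - 1)(1 + ε) = e^{1/16}(b + 1)`, so the gap `Δ_ij > (1 + ε)Δ_kl` gives
`(b - 1)/Δ_kl ≥ e^{1/16}(b + 1)/Δ_ij`, and squaring, `D₂' ≥ e^{1/8} D₁`. Since `b > 1` and `R ≥ Δ_ij`,
`D₁ > 8`, so `log(2 D₁ √C) > 2`. For `x ≥ e^{1/8} y` the logarithm grows by at least `1/8`, whence
`x log(2xc) - y log(2yc) ≥ (x - y) log(2yc) + x/8 > 1`.
-/

open Real

lemma two_lt_log_two_mul_mul {y c : ℝ} (hy : 8 < y) (hc : 1 ≤ c) : 2 < log (2 * y * c) := by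
  have hyc : 16 < 2 * y * c := by nlinarith
  have hexp2 : exp 2 < 9 := by
    have h3 := exp_one_lt_three
    have hsq : exp 2 = exp 1 * exp 1 := by rw [← exp_add]; norm_num
    nlinarith [exp_pos 1]
  exact (lt_log_iff_exp_lt (by linarith)).mpr (by linarith)

lemma one_lt_mul_log_sub_mul_log {x y c : ℝ} (hy : 8 < y) (hx : y * exp (1 / 8) ≤ x)
    (hc : 1 ≤ c) : 1 < x * log (2 * x * c) - y * log (2 * y * c) := by
  have hexp : 1 + 1 / 8 ≤ exp (1 / 8 : ℝ) := by linarith [add_one_le_exp (1 / 8 : ℝ)]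
  have hxy : y * (1 + 1 / 8) ≤ x := le_trans (by nlinarith) hx
  set L := log (2 * y * c)
  have hL : 2 < L := two_lt_log_two_mul_mul hy hc
  have hlog : L + 1 / 8 ≤ log (2 * x * c) := by
    have hmono : 2 * y * c * exp (1 / 8) ≤ 2 * x * c := by nlinarith [exp_pos (1 / 8 : ℝ)]
    calc L + 1 / 8 = log (2 * y * c * exp (1 / 8)) := by
          rw [log_mul (by positivity) (exp_ne_zero _), log_exp]
      _ ≤ log (2 * x * c) := log_le_log (by positivity) hmono
  calc 1 < (x - y) * L + x / 8 := by nlinarith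
    _ = x * (L + 1 / 8) - y * L := by ring
    _ ≤ x * log (2 * x * c) - y * L := by gcongr; linarith

lemma sub_one_mul_eq_mul_add_one {e ε b : ℝ} (hd : 1 - e + ε ≠ 0)
    (hb : b = (1 + e + ε) / (1 - e + ε)) : (b - 1) * (1 + ε) = e * (b + 1) := by
  rw [hb]; field_simp; ring

lemma one_lt_of_eq_add_div_sub_add {e ε b : ℝ} (he : 0 < e) (hε : ε > e - 1)
    (hb : b = (1 + e + ε) / (1 - e + ε)) : 1 < b := by
  rw [hb, lt_div_iff₀ (by linarith)]; linarith

lemma eight_lt_two_mul_sq_mul_sq_div_sq {b R Δ : ℝ} (hb : 1 < b) (hΔ : 0 < Δ) (hR : R ≥ Δ) :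
    8 < 2 * (b + 1) ^ 2 * R ^ 2 / Δ ^ 2 := by
  have hb2 : 4 < (b + 1) ^ 2 := by nlinarith
  have hR2 : Δ ^ 2 ≤ R ^ 2 := pow_le_pow_left₀ hΔ.le hR 2
  rw [lt_div_iff₀ (by positivity)]
  nlinarith [mul_le_mul_of_nonneg_left hR2 (by positivity : (0 : ℝ) ≤ 2 * (b + 1) ^ 2),
    mul_lt_mul_of_pos_right hb2 (pow_pos hΔ 2)]

lemma mul_sq_div_sq_le {e b ε R Δkl Δij : ℝ} (he : 0 < e) (hb : 1 < b) (hkl : 0 < Δkl)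
    (hgap : Δij > (1 + ε) * Δkl) (hid : (b - 1) * (1 + ε) = e * (b + 1)) :
    2 * (b + 1) ^ 2 * R ^ 2 / Δij ^ 2 * e ^ 2 ≤ 2 * (b - 1) ^ 2 * R ^ 2 / Δkl ^ 2 := by
  have hε : 0 < 1 + ε := by
    have : 0 < (b - 1) * (1 + ε) := by rw [hid]; nlinarith
    exact pos_of_mul_pos_right this (by linarith)
  have hij : 0 < Δij := lt_trans (mul_pos hε hkl) hgap
  have hratio : e * (b + 1) * Δkl ≤ (b - 1) * Δij := by
    rw [← hid, mul_assoc]; exact mul_le_mul_of_nonneg_left hgap.le (by linarith)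
  have hsq : (e * (b + 1) * Δkl) ^ 2 ≤ ((b - 1) * Δij) ^ 2 :=
    pow_le_pow_left₀ (by positivity) hratio 2
  rw [div_mul_eq_mul_div, div_le_div_iff₀ (by positivity) (by positivity)]
  nlinarith [mul_le_mul_of_nonneg_left hsq (by positivity : (0 : ℝ) ≤ 2 * R ^ 2)]

theorem splitting_order (ε b R C Δkl Δij : ℝ)
    (hkl : 0 < Δkl) (hgap : Δij > (1 + ε) * Δkl)
    (hε : ε > Real.exp (1 / 16) - 1)
    (hb : b = (1 + Real.exp (1 / 16) + ε) / (1 - Real.exp (1 / 16) + ε))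
    (hR : R ≥ Δij) (hC : 1 ≤ C) :
    4 * (2 * (b - 1) ^ 2 * R ^ 2 / Δkl ^ 2) *
        Real.log (2 * (2 * (b - 1) ^ 2 * R ^ 2 / Δkl ^ 2) * Real.sqrt C) - 3 >
      4 * (2 * (b + 1) ^ 2 * R ^ 2 / Δij ^ 2) *
        Real.log (2 * (2 * (b + 1) ^ 2 * R ^ 2 / Δij ^ 2) * Real.sqrt C) + 1 := by
  have he : 0 < exp (1 / 16) := exp_pos _
  have hb1 : 1 < b := one_lt_of_eq_add_div_sub_add he hε hb
  have hid := sub_one_mul_eq_mul_add_one (by linarith) hb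
  have hij : 0 < Δij := lt_trans (mul_pos (by linarith [add_one_le_exp (1 / 16 : ℝ)]) hkl) hgap
  have hD₁ := eight_lt_two_mul_sq_mul_sq_div_sq hb1 hij hR
  have hD₂ := mul_sq_div_sq_le (R := R) he hb1 hkl hgap hid
  rw [← exp_nat_mul, show ((2 : ℕ) : ℝ) * (1 / 16) = 1 / 8 by norm_num] at hD₂
  have := one_lt_mul_log_sub_mul_log hD₁ hD₂ (one_le_sqrt.mpr hC)
  linarith
end
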